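/- arXiv:1110.4723 — 2 statements merged into one kernel-verified Lean document; each statement's English description precedes it below -/
import Mathlib

section
/- In a live-path graph with fixed negative seed set N₀, the influence blocking set satisfies the set-inclusion form of submodularity: for any S ⊆ T ⊆ V and any vertex v ∉ T ∪ N₀, IBS(T ∪ {v}) \ IBS(T) ⊆ IBS(S ∪ {v}) \ IBS(S). -/
variable {V : Type*}

/-- There is a walk of length `n` (number of edges) from `u` to `w` along relation `E`. -/
inductive PathLen (E : V → V → Prop) : V → V → ℕ → Prop
  | refl (v : V) : PathLen E v v 0
  | tail {u v w : V} {n : ℕ} : PathLen E u v n → E v w → PathLen E u w (n + 1)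

/-- Shortest-path distance (number of edges) from the set `S` to `v` along edges `E`,
`⊤` if no path exists. -/
noncomputable def eDist (E : V → V → Prop) (S : Set V) (v : V) : ℕ∞ :=
  sInf {n : ℕ∞ | ∃ m : ℕ, n = (m : ℕ∞) ∧ ∃ s ∈ S, PathLen E s v m}

/-- An edge relation is "live-path" if every vertex has at most one in-edge. -/
def LivePathRel (E : V → V → Prop) : Prop :=
  ∀ ⦃u u' v : V⦄, E u v → E u' v → u = u'

/-- `l` is a path (list of successive vertices) along `E` from `s` to `v`. -/
def IsPathFrom (E : V → V → Prop) (l : List V) (s v : V) : Prop :=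
  l.Chain' E ∧ l.head? = some s ∧ l.getLast? = some v

/-- `l` is a shortest path along `E` from the set `S` to `v`:
it starts at some node of `S`, ends at `v`, and its number of edges equals `eDist E S v`. -/
def IsShortestPath (E : V → V → Prop) (S : Set V) (v : V) (l : List V) : Prop :=
  (∃ s ∈ S, IsPathFrom E l s v) ∧ (l.length : ℕ∞) = eDist E S v + 1

/-- `v` is negatively activated (-active) under positive seeds `S` and negative seeds `N₀`. -/
def NegActive (pos neg : V → V → Prop) (N₀ S : Set V) (v : V) : Prop :=
  eDist neg N₀ v < ⊤ ∧ eDist neg N₀ v ≤ eDist pos S v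

/-- Influence blocking set: vertices -active with empty positive seed set
but not -active with positive seed set `S`. -/
def IBS (pos neg : V → V → Prop) (N₀ S : Set V) : Set V :=
  {v | NegActive pos neg N₀ ∅ v ∧ ¬ NegActive pos neg N₀ S v}

/-!
Enlarging the positive seed set can only shorten positive distances, so `IBS` is monotone.
Moreover `d⁺(T ∪ {v}, u) = min (d⁺(T, u)) (d⁺({v}, u))`: a vertex that enters `IBS` when `v`
is added to `T` is blocked by `v` alone, hence already lies in `IBS {v} ⊆ IBS (S ∪ {v})`,
and it is outside `IBS S ⊆ IBS T`.
-/

lemma eDist_anti (E : V → V → Prop) {A B : Set V} (h : A ⊆ B) (v : V) :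
    eDist E B v ≤ eDist E A v := by
  apply sInf_le_sInf
  rintro n ⟨m, rfl, s, hs, hp⟩
  exact ⟨m, rfl, s, h hs, hp⟩

lemma eDist_union (E : V → V → Prop) (A B : Set V) (v : V) :
    eDist E (A ∪ B) v = min (eDist E A v) (eDist E B v) := by
  unfold eDist
  rw [← sInf_union]
  congr 1
  ext n
  constructor
  · rintro ⟨m, rfl, s, hs | hs, hp⟩
    · exact Or.inl ⟨m, rfl, s, hs, hp⟩
    · exact Or.inr ⟨m, rfl, s, hs, hp⟩
  · rintro (⟨m, rfl, s, hs, hp⟩ | ⟨m, rfl, s, hs, hp⟩)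
    · exact ⟨m, rfl, s, Or.inl hs, hp⟩
    · exact ⟨m, rfl, s, Or.inr hs, hp⟩

section IBS

variable {pos neg : V → V → Prop} {N₀ A B : Set V} {u : V}

lemma NegActive.anti (h : NegActive pos neg N₀ B u) (hAB : A ⊆ B) :
    NegActive pos neg N₀ A u :=
  ⟨h.1, h.2.trans (eDist_anti pos hAB u)⟩

lemma IBS_mono (hAB : A ⊆ B) : IBS pos neg N₀ A ⊆ IBS pos neg N₀ B :=
  fun _ ⟨h₀, hA⟩ => ⟨h₀, fun hB => hA (hB.anti hAB)⟩

lemma eDist_lt_of_not_negActive (h₀ : NegActive pos neg N₀ ∅ u)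
    (h : ¬ NegActive pos neg N₀ A u) : eDist pos A u < eDist neg N₀ u :=
  lt_of_not_ge fun hle => h ⟨h₀.1, hle⟩

lemma mem_IBS_of_mem_IBS_union (h : u ∈ IBS pos neg N₀ (A ∪ B))
    (hA : NegActive pos neg N₀ A u) : u ∈ IBS pos neg N₀ B := by
  have hlt := eDist_lt_of_not_negActive h.1 h.2
  rw [eDist_union, min_lt_iff] at hlt
  have hB : eDist pos B u < eDist neg N₀ u := hlt.resolve_left hA.2.not_gt
  exact ⟨h.1, fun hB' => hB'.2.not_gt hB⟩

end IBS

theorem stmt5_general (pos neg : V → V → Prop)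
    (N₀ S T : Set V) (hST : S ⊆ T) (v : V) :
    IBS pos neg N₀ (T ∪ {v}) \ IBS pos neg N₀ T ⊆
      IBS pos neg N₀ (S ∪ {v}) \ IBS pos neg N₀ S := by
  rintro u ⟨hTv, hT⟩
  have hActT : NegActive pos neg N₀ T u := by
    by_contra h
    exact hT ⟨hTv.1, h⟩
  exact ⟨IBS_mono Set.subset_union_right (mem_IBS_of_mem_IBS_union hTv hActT),
    fun hS => hT (IBS_mono hST hS)⟩

/-- Set-inclusion form of submodularity of the influence blocking set. -/
theorem stmt5 (pos neg : V → V → Prop)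
    (hpos : LivePathRel pos) (hneg : LivePathRel neg)
    (N₀ S T : Set V) (hST : S ⊆ T) (v : V) (hv : v ∉ T ∪ N₀) :
    IBS pos neg N₀ (T ∪ {v}) \ IBS pos neg N₀ T ⊆
      IBS pos neg N₀ (S ∪ {v}) \ IBS pos neg N₀ S :=
  stmt5_general pos neg N₀ S T hST v
end

section
/- In a live-path graph with fixed negative seed set N₀, the cardinality function f(S) = |IBS(S)| on finite vertex sets is monotone and submodular: for all S ⊆ T and x ∉ T ∪ N₀, f(S) ≤ f(T) and f(S ∪ {x}) − f(S) ≥ f(T ∪ {x}) − f(T). -/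
variable {V : Type*}

/-! Since `d⁺(S, v) = min_{s ∈ S} d⁺({s}, v)`, a vertex lies in `IBS(S)` iff it is reached by the
negative cascade and some positive seed in `S` reaches it strictly earlier. Hence `IBS` sends
unions of seed sets to unions, so `|IBS(·)|` is a coverage function, and coverage functions are
monotone and submodular. -/

lemma eDist_anti_s6 (E : V → V → Prop) (v : V) : Antitone fun S : Set V => eDist E S v :=
  fun _ _ h => sInf_le_sInf fun _ ⟨m, hm, s, hs, hp⟩ => ⟨m, hm, s, h hs, hp⟩

@[simp]
lemma eDist_empty (E : V → V → Prop) (v : V) : eDist E ∅ v = ⊤ := by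
  simp [eDist]

lemma mem_IBS_iff {pos neg : V → V → Prop} {N₀ S : Set V} {v : V} :
    v ∈ IBS pos neg N₀ S ↔ eDist neg N₀ v < ⊤ ∧ eDist pos S v < eDist neg N₀ v := by
  simp only [IBS, NegActive, eDist_empty, le_top, and_true, Set.mem_ofPred_eq, not_and, not_le]
  exact ⟨fun h => ⟨h.1, h.2 h.1⟩, fun h => ⟨h.1, fun _ => h.2⟩⟩

lemma IBS_mono_s6 (pos neg : V → V → Prop) (N₀ : Set V) : Monotone (IBS pos neg N₀) := by
  intro A B hAB v hv
  obtain ⟨hreach, hlt⟩ := mem_IBS_iff.1 hv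
  exact mem_IBS_iff.2 ⟨hreach, (eDist_anti_s6 pos v hAB).trans_lt hlt⟩

lemma IBS_union (pos neg : V → V → Prop) (N₀ A B : Set V) :
    IBS pos neg N₀ (A ∪ B) = IBS pos neg N₀ A ∪ IBS pos neg N₀ B := by
  ext v
  simp only [Set.mem_union, mem_IBS_iff, eDist_union, min_lt_iff, and_or_left]

lemma Set.ncard_union_add_ncard_le {α : Type*} [Finite α] {A B : Set α} (C : Set α)
    (h : A ⊆ B) : (B ∪ C).ncard + A.ncard ≤ (A ∪ C).ncard + B.ncard := by
  rw [Set.union_comm B, Set.union_comm A, ← Set.ncard_sdiff_add_ncard,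
    ← Set.ncard_sdiff_add_ncard]
  have := Set.ncard_le_ncard (Set.sdiff_subset_sdiff_right h : C \ B ⊆ C \ A)
  omega

theorem stmt6_general [Fintype V] (pos neg : V → V → Prop)
    (N₀ S T : Set V) (hST : S ⊆ T) (x : V) :
    (IBS pos neg N₀ S).ncard ≤ (IBS pos neg N₀ T).ncard ∧
    ((IBS pos neg N₀ (T ∪ {x})).ncard : ℝ) - ((IBS pos neg N₀ T).ncard : ℝ) ≤
      ((IBS pos neg N₀ (S ∪ {x})).ncard : ℝ) - ((IBS pos neg N₀ S).ncard : ℝ) := by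
  have hmono := IBS_mono_s6 pos neg N₀ hST
  refine ⟨Set.ncard_le_ncard hmono, ?_⟩
  have hsubmod : ((IBS pos neg N₀ (T ∪ {x})).ncard + (IBS pos neg N₀ S).ncard : ℝ) ≤
      (IBS pos neg N₀ (S ∪ {x})).ncard + (IBS pos neg N₀ T).ncard := by
    rw [IBS_union, IBS_union]
    exact_mod_cast Set.ncard_union_add_ncard_le _ hmono
  linarith

/-- The cardinality function `S ↦ |IBS(S)|` is monotone and submodular. -/
theorem stmt6 [Fintype V] (pos neg : V → V → Prop)
    (hpos : LivePathRel pos) (hneg : LivePathRel neg)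
    (N₀ S T : Set V) (hST : S ⊆ T) (x : V) (hx : x ∉ T ∪ N₀) :
    (IBS pos neg N₀ S).ncard ≤ (IBS pos neg N₀ T).ncard ∧
    ((IBS pos neg N₀ (T ∪ {x})).ncard : ℝ) - ((IBS pos neg N₀ T).ncard : ℝ) ≤
      ((IBS pos neg N₀ (S ∪ {x})).ncard : ℝ) - ((IBS pos neg N₀ S).ncard : ℝ) :=
  stmt6_general pos neg N₀ S T hST x
end
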